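/- Suppose ⟨λ(w), H(z)⟩ + a(z) = ⟨λ̃(w), H̃(z)⟩ + b(z) + c(w) for all z ∈ ℝ^n and all w ∈ 𝒲, and suppose there exist m+1 points w_0, w_1, …, w_m ∈ 𝒲 such that the m×m matrix L whose l-th column is λ(w_l) − λ(w_0) is invertible. Then there exist an m×m real matrix M and a vector Q ∈ ℝ^m such that H(z) = M H̃(z) + Q for all z ∈ ℝ^n; explicitly, one may take M = (Lᵀ)^{-1} L̃ᵀ and Q = (Lᵀ)^{-1} d, where L̃ is the matrix whose l-th column is λ̃(w_l) − λ̃(w_0) and d is the vector with entries d_l = c(w_l) − c(w_0). -/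

import Mathlib

open Matrix

/-! Subtracting the identity at `w₀` from the identity at each `w_l` cancels `a`, `b` and the
`w`-independent part, leaving the linear system `Lᵀ H(z) = L̃ᵀ H̃(z) + d`, which is solved by
inverting `Lᵀ`. -/

section

variable {W ι κ R : Type*} [Fintype ι] [CommRing R]

theorem sub_dotProduct_eq_of_forall_dotProduct_add_eq {lam lam' : W → ι → R} {x x' : ι → R}
    {a b : R} {c : W → R} (h : ∀ w, lam w ⬝ᵥ x + a = lam' w ⬝ᵥ x' + b + c w) (w₀ w : W) :
    (lam w - lam w₀) ⬝ᵥ x = (lam' w - lam' w₀) ⬝ᵥ x' + (c w - c w₀) := by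
  rw [sub_dotProduct, sub_dotProduct]
  linear_combination h w - h w₀

theorem transpose_of_sub_mulVec (v : W → ι → R) (w₀ : W) (ws : κ → W) (x : ι → R) :
    (of fun i l => v (ws l) i - v w₀ i)ᵀ *ᵥ x = fun l => (v (ws l) - v w₀) ⬝ᵥ x :=
  rfl

end

theorem Matrix.eq_inv_mul_mulVec_add_of_mulVec_eq {ι R : Type*} [Fintype ι] [DecidableEq ι]
    [CommRing R] {A B : Matrix ι ι R} {x y d : ι → R} (hA : IsUnit A.det)
    (h : A *ᵥ x = B *ᵥ y + d) : x = (A⁻¹ * B) *ᵥ y + A⁻¹ *ᵥ d := by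
  rw [← mulVec_mulVec, ← mulVec_add, ← h, mulVec_mulVec, nonsing_inv_mul A hA, one_mulVec]

/-- **The linear-algebraic step of the iVAE identifiability proof.**
Suppose `⟨λ(w), H(z)⟩ + a(z) = ⟨λ̃(w), H̃(z)⟩ + b(z) + c(w)` for all `z ∈ ℝ^n` and `w ∈ 𝒲`,
and there are `m+1` points `w₀, ws 0, …, ws (m-1)` such that the `m × m` matrix `L` whose
`l`-th column is `λ(ws l) - λ(w₀)` is invertible.  Then there exist a matrix `M` and a
vector `Q` with `H(z) = M H̃(z) + Q` for all `z`; explicitly one may take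
`M = (Lᵀ)⁻¹ L̃ᵀ` and `Q = (Lᵀ)⁻¹ d`, where `L̃` has `l`-th column `λ̃(ws l) - λ̃(w₀)` and
`d` has entries `d l = c(ws l) - c(w₀)`. -/
theorem expfam_sufficient_statistics_affine
    {n m : ℕ} {W : Type*}
    (H H' : (Fin n → ℝ) → (Fin m → ℝ))
    (lam lam' : W → Fin m → ℝ)
    (a b : (Fin n → ℝ) → ℝ) (c : W → ℝ)
    (heq : ∀ (z : Fin n → ℝ) (w : W),
      (∑ i, lam w i * H z i) + a z = (∑ i, lam' w i * H' z i) + b z + c w)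
    (w₀ : W) (ws : Fin m → W)
    (L L' : Matrix (Fin m) (Fin m) ℝ) (dv : Fin m → ℝ)
    (hL : L = Matrix.of fun i l => lam (ws l) i - lam w₀ i)
    (hL' : L' = Matrix.of fun i l => lam' (ws l) i - lam' w₀ i)
    (hdv : dv = fun l => c (ws l) - c w₀)
    (hLinv : IsUnit L.det) :
    ∃ (M : Matrix (Fin m) (Fin m) ℝ) (Q : Fin m → ℝ),
      M = L.transpose⁻¹ * L'.transpose ∧ Q = L.transpose⁻¹.mulVec dv ∧
      ∀ z, H z = M.mulVec (H' z) + Q := by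
  refine ⟨_, _, rfl, rfl, fun z => eq_inv_mul_mulVec_add_of_mulVec_eq
    (by rwa [det_transpose]) ?_⟩
  subst hL hL' hdv
  rw [transpose_of_sub_mulVec, transpose_of_sub_mulVec]
  funext l
  exact sub_dotProduct_eq_of_forall_dotProduct_add_eq (heq z) w₀ (ws l)
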